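/- arXiv:1705.01204 — 3 statements merged into one kernel-verified Lean document; each statement's English description precedes it below -/
import Mathlib

section
/- Let P = Θ B Θᵀ where Θ ∈ {0,1}^{n×K} is a clustering matrix with minimal class size n_min > 0 and B ∈ ℝ^{K×K} is symmetric with smallest eigenvalue λ_min(B) ≥ c > 0. Then the smallest nonzero eigenvalue of P satisfies λ_K(P) ≥ c · n_min. -/
open Matrix

noncomputable def specNorm {m n : ℕ} (M : Matrix (Fin m) (Fin n) ℝ) : ℝ :=
  ‖LinearMap.toContinuousLinearMap (Matrix.toEuclideanLin M)‖

def IsClusterMatrix {n K : ℕ} (Θ : Matrix (Fin n) (Fin K) ℝ) : Prop :=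
  (∀ i k, Θ i k = 0 ∨ Θ i k = 1) ∧ ∀ i, ∑ k, Θ i k = 1

noncomputable def eigDesc {n : ℕ} (M : Matrix (Fin n) (Fin n) ℝ)
    (hM : M.IsHermitian) : ℕ → ℝ :=
  fun j => if h : j < n then hM.eigenvalues (Tuple.sort hM.eigenvalues (Fin.rev ⟨j, h⟩)) else 0

/-! By the max–min characterisation of eigenvalues it suffices to find a `K`-dimensional subspace
on which `v ⬝ᵥ P v ≥ c·n_min·(v ⬝ᵥ v)`. Take the range of `Θ`: since `Θᵀ Θ = diag(N)` with
`N_k ≥ n_min > 0` the cluster sizes, `Θ` is injective, and for `v = Θ y`, writing `z = Θᵀ Θ y`,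
`v ⬝ᵥ P v = z ⬝ᵥ B z ≥ c ‖z‖² = c ∑ N_k² y_k² ≥ c·n_min ∑ N_k y_k² = c·n_min ‖v‖²`. -/

open Finset

namespace Matrix.IsHermitian

lemma dotProduct_mulVec_comm {ι : Type*} [Fintype ι] {M : Matrix ι ι ℝ} (hM : M.IsHermitian)
    (x y : ι → ℝ) :
    x ⬝ᵥ (M *ᵥ y) = (M *ᵥ x) ⬝ᵥ y := by
  rw [dotProduct_mulVec, ← mulVec_transpose, ← conjTranspose_eq_transpose_of_trivial, hM.eq]

variable {ι : Type*} [Fintype ι] [DecidableEq ι] {M : Matrix ι ι ℝ}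

lemma dotProduct_mulVec_eq_sum_eigenvalues (hM : M.IsHermitian) (v : ι → ℝ) :
    v ⬝ᵥ (M *ᵥ v) = ∑ i, hM.eigenvalues i * (⇑(hM.eigenvectorBasis i) ⬝ᵥ v) ^ 2 := by
  have h := hM.eigenvectorBasis.sum_inner_mul_inner (WithLp.toLp 2 v) (WithLp.toLp 2 (M *ᵥ v))
  simp only [EuclideanSpace.inner_eq_star_dotProduct, star_trivial] at h
  rw [dotProduct_comm, ← h]
  refine sum_congr rfl fun i _ => ?_
  rw [← hM.dotProduct_mulVec_comm, hM.mulVec_eigenvectorBasis, dotProduct_smul, smul_eq_mul,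
    dotProduct_comm v]
  ring

lemma dotProduct_self_eq_sum_sq (hM : M.IsHermitian) (v : ι → ℝ) :
    v ⬝ᵥ v = ∑ i, (⇑(hM.eigenvectorBasis i) ⬝ᵥ v) ^ 2 := by
  have h := hM.eigenvectorBasis.sum_inner_mul_inner (WithLp.toLp 2 v) (WithLp.toLp 2 v)
  simp only [EuclideanSpace.inner_eq_star_dotProduct, star_trivial] at h
  rw [← h]
  refine sum_congr rfl fun i _ => ?_
  rw [dotProduct_comm]
  ring

lemma mul_dotProduct_self_le_dotProduct_mulVec (hM : M.IsHermitian) {c : ℝ}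
    (hc : ∀ i, c ≤ hM.eigenvalues i) (v : ι → ℝ) : c * (v ⬝ᵥ v) ≤ v ⬝ᵥ (M *ᵥ v) := by
  rw [hM.dotProduct_mulVec_eq_sum_eigenvalues, hM.dotProduct_self_eq_sum_sq, mul_sum]
  exact sum_le_sum fun i _ => mul_le_mul_of_nonneg_right (hc i) (sq_nonneg _)

lemma dotProduct_mulVec_lt_mul_dotProduct_self (hM : M.IsHermitian) {μ : ℝ} {v : ι → ℝ}
    (hv : ∀ i, μ ≤ hM.eigenvalues i → ⇑(hM.eigenvectorBasis i) ⬝ᵥ v = 0) (hv0 : v ≠ 0) :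
    v ⬝ᵥ (M *ᵥ v) < μ * (v ⬝ᵥ v) := by
  rw [hM.dotProduct_mulVec_eq_sum_eigenvalues, hM.dotProduct_self_eq_sum_sq, mul_sum]
  obtain ⟨i₀, hi₀⟩ : ∃ i, ⇑(hM.eigenvectorBasis i) ⬝ᵥ v ≠ 0 := by
    by_contra! h
    refine hv0 (dotProduct_self_eq_zero.mp ?_)
    simp [hM.dotProduct_self_eq_sum_sq, h]
  refine sum_lt_sum (fun i _ => ?_) ⟨i₀, mem_univ _, ?_⟩
  · rcases le_or_gt μ (hM.eigenvalues i) with h | h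
    · simp [hv i h]
    · exact mul_le_mul_of_nonneg_right h.le (sq_nonneg _)
  · exact mul_lt_mul_of_pos_right (not_le.mp (mt (hv i₀) hi₀)) (by positivity)

end Matrix.IsHermitian

-- `Tuple.sort` sorts increasingly, so `eigDesc M hM j` is the sorted eigenvalue at position
-- `n - 1 - j` and dominates the `n - j` eigenvalues at positions `0, …, n - 1 - j`.
lemma sub_le_card_filter_eigenvalues_le_eigDesc {n : ℕ} {M : Matrix (Fin n) (Fin n) ℝ}
    (hM : M.IsHermitian) {j : ℕ} (hj : j < n) :
    n - j ≤ #{i | hM.eigenvalues i ≤ eigDesc M hM j} := by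
  set σ := Tuple.sort hM.eigenvalues
  have hsub : (Iic (Fin.rev ⟨j, hj⟩)).map σ.toEmbedding ⊆
      ({i | hM.eigenvalues i ≤ eigDesc M hM j} : Finset (Fin n)) := by
    intro i hi
    obtain ⟨m, hm, rfl⟩ := mem_map.mp hi
    simpa [eigDesc, hj] using Tuple.monotone_sort hM.eigenvalues (mem_Iic.mp hm)
  calc n - j = #(Iic (Fin.rev ⟨j, hj⟩)) := by simp; omega
    _ ≤ _ := (card_map _).symm.trans_le (card_le_card hsub)

lemma card_le_of_eigDesc_lt {n : ℕ} {M : Matrix (Fin n) (Fin n) ℝ}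
    (hM : M.IsHermitian) {j : ℕ} (hj : j < n) {μ : ℝ} (hμ : eigDesc M hM j < μ) :
    Fintype.card {i // μ ≤ hM.eigenvalues i} ≤ j := by
  have hsub : ({i | hM.eigenvalues i ≤ eigDesc M hM j} : Finset (Fin n)) ⊆
      ({i | ¬ μ ≤ hM.eigenvalues i} : Finset (Fin n)) :=
    fun i => by simpa using fun hi => hi.trans_lt hμ
  have := card_filter_add_card_filter_not (s := univ) (fun i => μ ≤ hM.eigenvalues i)
  have := sub_le_card_filter_eigenvalues_le_eigDesc hM hj
  have := card_le_card hsub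
  rw [Fintype.card_subtype]
  simp only [card_univ, Fintype.card_fin] at *
  omega

-- The max–min half of Courant–Fischer: were `eigDesc M hM j < μ`, at most `j` eigenvalues would
-- be `≥ μ`, so the vectors orthogonal to their eigenvectors would form a subspace of dimension
-- `≥ n - j`, meeting `V` nontrivially, on which the form is `< μ ‖v‖²`.
theorem le_eigDesc_of_lt_finrank {n : ℕ} {M : Matrix (Fin n) (Fin n) ℝ} (hM : M.IsHermitian)
    (V : Submodule ℝ (Fin n → ℝ)) {j : ℕ} (hj : j < Module.finrank ℝ V) {μ : ℝ}
    (hV : ∀ v ∈ V, μ * (v ⬝ᵥ v) ≤ v ⬝ᵥ (M *ᵥ v)) : μ ≤ eigDesc M hM j := by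
  have hVn : Module.finrank ℝ V ≤ n := by simpa using V.finrank_le
  by_contra! hlt
  let L := (Matrix.of fun (i : {i // μ ≤ hM.eigenvalues i}) => ⇑(hM.eigenvectorBasis i)).mulVecLin
  have hker : n - j ≤ Module.finrank ℝ (LinearMap.ker L) := by
    have := L.finrank_range_add_finrank_ker
    have := (LinearMap.range L).finrank_le
    have := card_le_of_eigDesc_lt hM (by omega) hlt
    simp only [Module.finrank_fintype_fun_eq_card, Fintype.card_fin] at *
    omega
  obtain ⟨v, hvV, hvL, hv0⟩ : ∃ v ∈ V, v ∈ LinearMap.ker L ∧ v ≠ 0 := by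
    by_contra! h
    have := Submodule.finrank_add_finrank_le_of_disjoint
      (Submodule.disjoint_def.mpr fun v hv hv' => h v hv hv')
    simp only [Module.finrank_fin_fun] at this
    omega
  have := hM.dotProduct_mulVec_lt_mul_dotProduct_self (fun i hi => congrFun hvL ⟨i, hi⟩) hv0
  linarith [hV v hvV]

section OrthogonalColumns

variable {m κ : Type*} [Fintype m] [Fintype κ] [DecidableEq κ] {A : Matrix m κ ℝ} {d : κ → ℝ}

lemma dotProduct_mulVec_of_transpose_mul_self_eq_diagonal (hA : Aᵀ * A = diagonal d)
    (y w : κ → ℝ) : (A *ᵥ y) ⬝ᵥ (A *ᵥ w) = (diagonal d *ᵥ y) ⬝ᵥ w := by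
  rw [dotProduct_mulVec, ← mulVec_transpose, mulVec_mulVec, hA]

lemma injective_mulVec_of_transpose_mul_self_eq_diagonal (hA : Aᵀ * A = diagonal d)
    (hd : ∀ k, d k ≠ 0) : Function.Injective A.mulVec := by
  refine Function.Injective.of_comp (f := Aᵀ.mulVec) ?_
  rw [show Aᵀ.mulVec ∘ A.mulVec = (Aᵀ * A).mulVec from funext fun y => mulVec_mulVec y _ _, hA]
  exact mulVec_injective_of_isUnit (isUnit_diagonal.mpr (Pi.isUnit_iff.mpr fun k => (hd k).isUnit))

lemma mul_dotProduct_le_of_le_diagonal {a : ℝ} (ha : 0 ≤ a) (had : ∀ k, a ≤ d k) (y : κ → ℝ) :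
    a * ((diagonal d *ᵥ y) ⬝ᵥ y) ≤ (diagonal d *ᵥ y) ⬝ᵥ (diagonal d *ᵥ y) := by
  simp only [mulVec_diagonal, dotProduct, mul_sum]
  refine sum_le_sum fun k _ => ?_
  have := mul_le_mul_of_nonneg_right (had k) (mul_nonneg (ha.trans (had k)) (sq_nonneg (y k)))
  nlinarith

lemma mul_dotProduct_self_le_of_transpose_mul_self_eq_diagonal (hA : Aᵀ * A = diagonal d)
    {a : ℝ} (ha : 0 ≤ a) (had : ∀ k, a ≤ d k) {B : Matrix κ κ ℝ} (hB : B.IsHermitian) {c : ℝ}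
    (hc : 0 ≤ c) (hBc : ∀ k, c ≤ hB.eigenvalues k) (y : κ → ℝ) :
    c * a * ((A *ᵥ y) ⬝ᵥ (A *ᵥ y)) ≤ (A *ᵥ y) ⬝ᵥ ((A * B * Aᵀ) *ᵥ (A *ᵥ y)) := by
  set z := diagonal d *ᵥ y
  have hq : (A *ᵥ y) ⬝ᵥ ((A * B * Aᵀ) *ᵥ (A *ᵥ y)) = z ⬝ᵥ (B *ᵥ z) := by
    rw [Matrix.mul_assoc, ← mulVec_mulVec, dotProduct_mulVec_of_transpose_mul_self_eq_diagonal hA,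
      ← mulVec_mulVec, mulVec_mulVec y Aᵀ A, hA]
  calc c * a * ((A *ᵥ y) ⬝ᵥ (A *ᵥ y)) = c * (a * (z ⬝ᵥ y)) := by
        rw [dotProduct_mulVec_of_transpose_mul_self_eq_diagonal hA]; ring
    _ ≤ c * (z ⬝ᵥ z) := mul_le_mul_of_nonneg_left (mul_dotProduct_le_of_le_diagonal ha had y) hc
    _ ≤ z ⬝ᵥ (B *ᵥ z) := hB.mul_dotProduct_self_le_dotProduct_mulVec hBc z
    _ = _ := hq.symm

end OrthogonalColumns

namespace IsClusterMatrix

variable {n K : ℕ} {Θ : Matrix (Fin n) (Fin K) ℝ}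

lemma exists_eq_ite (hΘ : IsClusterMatrix Θ) :
    ∃ g : Fin n → Fin K, ∀ i k, Θ i k = if g i = k then 1 else 0 := by
  obtain ⟨h01, hsum⟩ := hΘ
  have hnonneg : ∀ i k, 0 ≤ Θ i k := fun i k => by rcases h01 i k with h | h <;> simp [h]
  have hone : ∀ i, ∃ k, Θ i k = 1 := fun i => by
    by_contra! h
    have : ∑ k, Θ i k = 0 := sum_eq_zero fun k _ => (h01 i k).resolve_right (h k)
    linarith [hsum i]
  choose g hg using hone
  refine ⟨g, fun i k => ?_⟩
  split_ifs with hk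
  · exact hk ▸ hg i
  · refine (h01 i k).resolve_right fun h1 => ?_
    have := sum_le_sum_of_subset_of_nonneg (subset_univ {g i, k}) fun l _ _ => hnonneg i l
    rw [sum_pair hk, hg i, h1, hsum i] at this
    norm_num at this

lemma transpose_mul_self (hΘ : IsClusterMatrix Θ) :
    Θᵀ * Θ = diagonal fun k => (#{i | Θ i k = 1} : ℝ) := by
  obtain ⟨g, hg⟩ := hΘ.exists_eq_ite
  ext k l
  simp only [mul_apply, transpose_apply, hg, diagonal_apply]
  split_ifs with hkl
  · subst hkl
    simp +contextual [sum_boole]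
  · simp +contextual [Ne.symm hkl]

end IsClusterMatrix

theorem smallest_nonzero_eig_lower_bound_general {n K : ℕ} (hK : 0 < K)
    (Θ : Matrix (Fin n) (Fin K) ℝ) (hΘ : IsClusterMatrix Θ)
    (B : Matrix (Fin K) (Fin K) ℝ) (hB : B.IsHermitian)
    (c : ℝ) (hc : 0 < c) (hBc : ∀ k, c ≤ hB.eigenvalues k)
    (nmin : ℕ)
    (hnmin : nmin = Finset.univ.inf' ⟨⟨0, hK⟩, Finset.mem_univ _⟩
      (fun k => (Finset.univ.filter fun i => Θ i k = 1).card))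
    (hnminpos : 0 < nmin)
    (P : Matrix (Fin n) (Fin n) ℝ) (hPdef : P = Θ * B * Θᵀ)
    (hP : P.IsHermitian) :
    c * nmin ≤ eigDesc P hP (K - 1) := by
  have hgram := hΘ.transpose_mul_self
  have hsize : ∀ k, (nmin : ℝ) ≤ #{i | Θ i k = 1} := fun k => by
    rw [hnmin]
    exact_mod_cast inf'_le _ (mem_univ k)
  have hinj : Function.Injective Θ.mulVecLin :=
    injective_mulVec_of_transpose_mul_self_eq_diagonal hgram fun k =>
      ((Nat.cast_pos.mpr hnminpos).trans_le (hsize k)).ne'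
  refine le_eigDesc_of_lt_finrank hP (LinearMap.range Θ.mulVecLin) ?_ ?_
  · rw [LinearMap.finrank_range_of_inj hinj, Module.finrank_fin_fun]
    omega
  · rintro _ ⟨y, rfl⟩
    rw [hPdef]
    exact mul_dotProduct_self_le_of_transpose_mul_self_eq_diagonal hgram (Nat.cast_nonneg _) hsize
      hB hc.le hBc y

theorem smallest_nonzero_eig_lower_bound {n K : ℕ} (hK : 0 < K) (hKn : K ≤ n)
    (Θ : Matrix (Fin n) (Fin K) ℝ) (hΘ : IsClusterMatrix Θ)
    (B : Matrix (Fin K) (Fin K) ℝ) (hB : B.IsHermitian)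
    (c : ℝ) (hc : 0 < c) (hBc : ∀ k, c ≤ hB.eigenvalues k)
    (nmin : ℕ)
    (hnmin : nmin = Finset.univ.inf' ⟨⟨0, hK⟩, Finset.mem_univ _⟩
      (fun k => (Finset.univ.filter fun i => Θ i k = 1).card))
    (hnminpos : 0 < nmin)
    (P : Matrix (Fin n) (Fin n) ℝ) (hPdef : P = Θ * B * Θᵀ)
    (hP : P.IsHermitian) :
    c * nmin ≤ eigDesc P hP (K - 1) :=
  smallest_nonzero_eig_lower_bound_general hK Θ hΘ B hB c hc hBc nmin hnmin hnminpos P hPdef hP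
end

section
/- Let P_t (t ranging over a finite index set) and P̂_{t,r} be symmetric matrices. Define δ₁(r) = ‖P_{t,r} − P_t‖ (nondecreasing in r) and δ₂(r) = 4C√(nα/(r∨1)) for some constant C, and suppose on some event ‖P̂_{t,r} − P_{t,r}‖ ≤ δ₂(r)/4 for all r. Define r̂ = max{r : ‖P̂_{t,r} − P̂_{t,ρ}‖ ≤ δ₂(ρ) for all ρ < r}. Then on this event, ‖P̂_{t,r̂} − P_t‖ ≤ 10·min_r [δ₁(r) + δ₂(r)/4]. -/
theorem lepskii_adaptation {E : Type*} [NormedAddCommGroup E]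
    (P : E) (Phat Pbar : ℕ → E) (C N α : ℝ)
    (δ2 : ℕ → ℝ) (hδ2 : δ2 = fun r => 4 * C * Real.sqrt (N * α / (max r 1 : ℕ)))
    (hmono : Monotone fun r => ‖Pbar r - P‖)
    (hevent : ∀ r, ‖Phat r - Pbar r‖ ≤ δ2 r / 4)
    (rhat : ℕ)
    (hmem : ∀ ρ < rhat, ‖Phat rhat - Phat ρ‖ ≤ δ2 ρ)
    (hmax : ∀ r, (∀ ρ < r, ‖Phat r - Phat ρ‖ ≤ δ2 ρ) → r ≤ rhat) :
    ∀ r, ‖Phat rhat - P‖ ≤ 10 * (‖Pbar r - P‖ + δ2 r / 4) := by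
  have hnn : ∀ r, 0 ≤ δ2 r := fun r => by
    have h := (norm_nonneg (Phat r - Pbar r)).trans (hevent r); linarith
  have hanti : ∀ a b : ℕ, a ≤ b → δ2 b ≤ δ2 a := by
    intro a b hab
    rcases le_or_gt C 0 with hC | hC
    · have h1 : δ2 a ≤ 0 := by
        rw [hδ2]
        have := Real.sqrt_nonneg (N * α / (max a 1 : ℕ))
        nlinarith
      have h2 : δ2 b ≤ 0 := by
        rw [hδ2]
        have := Real.sqrt_nonneg (N * α / (max b 1 : ℕ))
        nlinarith
      have := hnn a; have := hnn b; linarith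
    · rw [hδ2]
      dsimp only
      have hd1 : (0:ℝ) < ((max a 1 : ℕ) : ℝ) := by
        have : (1:ℕ) ≤ max a 1 := le_max_right a 1
        exact_mod_cast Nat.lt_of_lt_of_le Nat.zero_lt_one this
      have hd2 : ((max a 1 : ℕ) : ℝ) ≤ ((max b 1 : ℕ) : ℝ) := by
        exact_mod_cast max_le_max hab le_rfl
      have hs : Real.sqrt (N * α / (max b 1 : ℕ)) ≤ Real.sqrt (N * α / (max a 1 : ℕ)) := by
        rcases le_or_gt 0 (N * α) with hNα | hNα
        · exact Real.sqrt_le_sqrt (div_le_div_of_nonneg_left hNα hd1 hd2)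
        · have e1 : Real.sqrt (N * α / (max a 1 : ℕ)) = 0 := by
            apply Real.sqrt_eq_zero_of_nonpos
            exact div_nonpos_of_nonpos_of_nonneg hNα.le hd1.le
          have e2 : Real.sqrt (N * α / (max b 1 : ℕ)) = 0 := by
            apply Real.sqrt_eq_zero_of_nonpos
            exact div_nonpos_of_nonpos_of_nonneg hNα.le (hd1.trans_le hd2).le
          rw [e1, e2]
      nlinarith
  intro r
  have hd1r : (0:ℝ) ≤ ‖Pbar r - P‖ := norm_nonneg _
  rcases le_or_gt r rhat with hr | hr
  · have h1 : ‖Phat rhat - Phat r‖ ≤ δ2 r := by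
      rcases lt_or_eq_of_le hr with h | h
      · exact hmem r h
      · rw [h, sub_self, norm_zero]; exact hnn _
    have t : ‖Phat rhat - P‖ ≤ ‖Phat rhat - Phat r‖ + ‖Phat r - Pbar r‖ + ‖Pbar r - P‖ := by
      calc ‖Phat rhat - P‖ = ‖(Phat rhat - Phat r) + (Phat r - Pbar r) + (Pbar r - P)‖ := by
            congr 1; abel
        _ ≤ ‖(Phat rhat - Phat r) + (Phat r - Pbar r)‖ + ‖Pbar r - P‖ := norm_add_le _ _
        _ ≤ ‖Phat rhat - Phat r‖ + ‖Phat r - Pbar r‖ + ‖Pbar r - P‖ := by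
            have := norm_add_le (Phat rhat - Phat r) (Phat r - Pbar r); linarith
    have h2 := hevent r
    linarith [hnn r]
  · obtain ⟨ρ, hρlt, hρ⟩ : ∃ ρ, ρ < rhat + 1 ∧ δ2 ρ < ‖Phat (rhat+1) - Phat ρ‖ := by
      by_contra h
      push_neg at h
      have := hmax (rhat+1) (fun ρ hρ => h ρ hρ)
      omega
    have hρle : ρ ≤ rhat := by omega
    have hb : ‖Phat (rhat+1) - Phat ρ‖ ≤
        ‖Phat (rhat+1) - Pbar (rhat+1)‖ + ‖Pbar (rhat+1) - P‖ + ‖Pbar ρ - P‖ + ‖Phat ρ - Pbar ρ‖ := by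
      calc ‖Phat (rhat+1) - Phat ρ‖
          = ‖(Phat (rhat+1) - Pbar (rhat+1)) + (Pbar (rhat+1) - P) + (P - Pbar ρ) + (Pbar ρ - Phat ρ)‖ := by
            congr 1; abel
        _ ≤ ‖(Phat (rhat+1) - Pbar (rhat+1)) + (Pbar (rhat+1) - P) + (P - Pbar ρ)‖ + ‖Pbar ρ - Phat ρ‖ :=
            norm_add_le _ _
        _ ≤ ‖(Phat (rhat+1) - Pbar (rhat+1)) + (Pbar (rhat+1) - P)‖ + ‖P - Pbar ρ‖ + ‖Pbar ρ - Phat ρ‖ := by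
            have := norm_add_le ((Phat (rhat+1) - Pbar (rhat+1)) + (Pbar (rhat+1) - P)) (P - Pbar ρ)
            linarith
        _ ≤ ‖Phat (rhat+1) - Pbar (rhat+1)‖ + ‖Pbar (rhat+1) - P‖ + ‖P - Pbar ρ‖ + ‖Pbar ρ - Phat ρ‖ := by
            have := norm_add_le (Phat (rhat+1) - Pbar (rhat+1)) (Pbar (rhat+1) - P)
            linarith
        _ = ‖Phat (rhat+1) - Pbar (rhat+1)‖ + ‖Pbar (rhat+1) - P‖ + ‖Pbar ρ - P‖ + ‖Phat ρ - Pbar ρ‖ := by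
            rw [norm_sub_rev P (Pbar ρ), norm_sub_rev (Pbar ρ) (Phat ρ)]
    have hm1 : ‖Pbar (rhat+1) - P‖ ≤ ‖Pbar r - P‖ := hmono (by omega : rhat+1 ≤ r)
    have hm2 : ‖Pbar ρ - P‖ ≤ ‖Pbar r - P‖ := hmono (by omega : ρ ≤ r)
    have ha1 : δ2 (rhat+1) ≤ δ2 ρ := hanti ρ (rhat+1) (by omega)
    have he1 := hevent (rhat+1)
    have he2 := hevent ρ
    -- δ2 ρ < 4 * ‖Pbar r - P‖
    have key : δ2 ρ < 4 * ‖Pbar r - P‖ := by linarith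
    have h1 : ‖Phat rhat - Phat ρ‖ ≤ δ2 ρ := by
      rcases lt_or_eq_of_le hρle with h | h
      · exact hmem ρ h
      · rw [← h, sub_self, norm_zero]; exact hnn ρ
    have t : ‖Phat rhat - P‖ ≤ ‖Phat rhat - Phat ρ‖ + ‖Phat ρ - Pbar ρ‖ + ‖Pbar ρ - P‖ := by
      calc ‖Phat rhat - P‖ = ‖(Phat rhat - Phat ρ) + (Phat ρ - Pbar ρ) + (Pbar ρ - P)‖ := by
            congr 1; abel
        _ ≤ ‖(Phat rhat - Phat ρ) + (Phat ρ - Pbar ρ)‖ + ‖Pbar ρ - P‖ := norm_add_le _ _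
        _ ≤ ‖Phat rhat - Phat ρ‖ + ‖Phat ρ - Pbar ρ‖ + ‖Pbar ρ - P‖ := by
            have := norm_add_le (Phat rhat - Phat ρ) (Phat ρ - Pbar ρ); linarith
    linarith [hnn r]
end

section
/- Let f : [0,1] → ℝ be l times differentiable with |f^{(l)}(x) − f^{(l)}(x')| ≤ L|x − x'|^{β−l} for all x,x' ∈ [0,1], where l < β ≤ l+1. Let W : {−r,…,r} → ℝ satisfy |W(i)| ≤ W_max and (2r+1)⁻¹ Σ_{i=−r}^r i^k W(i) = 𝟙(k=0) for k = 0,…,l. Then for any t with r ≤ t ≤ T−r (T ≥ 2r), |(2r+1)⁻¹ Σ_{i=−r}^r W(i)·[f((t+i)/T) − f(t/T)]| ≤ (L·W_max/l!)·(r/T)^β. -/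
/-! The weights reproduce polynomials of degree `≤ l` (every moment but the zeroth vanishes), so
subtracting the degree-`l` Taylor polynomial of `f` at `t/T` from every `f ((t + i)/T)` leaves the
weighted sum unchanged. Each Taylor remainder is, by the Lagrange form, `(f⁽ˡ⁾ ξ - f⁽ˡ⁾ (t/T))`
times `(i/T)^l / l!`, which the Hölder condition bounds by `L (r/T)^β / l!`. -/

open Set Finset Nat

theorem taylorWithinEval_eq_taylorWithinEval_univ {E : Type*} [NormedAddCommGroup E]
    [NormedSpace ℝ E] {f : ℝ → E} {n : ℕ} {s : Set ℝ} {x₀ : ℝ} (hs : UniqueDiffOn ℝ s)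
    (hx₀ : x₀ ∈ s) (hf : ContDiffAt ℝ n f x₀) (x : ℝ) :
    taylorWithinEval f n s x₀ x = taylorWithinEval f n univ x₀ x := by
  simp only [taylor_within_apply, iteratedDerivWithin_univ]
  refine Finset.sum_congr rfl fun k hk => ?_
  rw [iteratedDerivWithin_eq_iteratedDeriv hs
    (hf.of_le (by exact_mod_cast Finset.mem_range_succ_iff.1 hk)) hx₀]

theorem exists_mem_uIcc_sub_taylorWithinEval_eq {f : ℝ → ℝ} {n : ℕ} (hf : ContDiff ℝ n f)
    (x₀ x : ℝ) : ∃ ξ ∈ uIcc x₀ x, f x - taylorWithinEval f n univ x₀ x =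
      (iteratedDeriv n f ξ - iteratedDeriv n f x₀) * (x - x₀) ^ n / n ! := by
  rcases eq_or_ne x₀ x with rfl | hne
  · exact ⟨x₀, left_mem_uIcc, by simp⟩
  cases n with
  | zero => exact ⟨x, right_mem_uIcc, by simp⟩
  | succ m =>
    obtain ⟨ξ, hξ, hrem⟩ := taylor_mean_remainder_lagrange_iteratedDeriv hne hf.contDiffOn
    refine ⟨ξ, uIoo_subset_uIcc_self hξ, ?_⟩
    rw [taylorWithinEval_succ, ← taylorWithinEval_eq_taylorWithinEval_univ (uniqueDiffOn_uIcc hne)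
      left_mem_uIcc (hf.of_le (by exact_mod_cast m.le_succ)).contDiffAt, iteratedDerivWithin_univ,
      smul_eq_mul]
    rw [Nat.factorial_succ] at hrem ⊢
    push_cast at hrem ⊢
    field_simp at hrem ⊢
    linear_combination hrem

theorem abs_sub_taylorWithinEval_le_of_holder {f : ℝ → ℝ} {l : ℕ} {β L δ : ℝ} {s : Set ℝ}
    (hs : s.OrdConnected) (hf : ContDiff ℝ l f) (hlβ : (l : ℝ) ≤ β) (hL : 0 ≤ L)
    (hHolder : ∀ x ∈ s, ∀ x' ∈ s,
      |iteratedDeriv l f x - iteratedDeriv l f x'| ≤ L * |x - x'| ^ (β - l))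
    {x₀ x : ℝ} (hx₀ : x₀ ∈ s) (hx : x ∈ s) (hδ : |x - x₀| ≤ δ) :
    |f x - taylorWithinEval f l univ x₀ x| ≤ L * δ ^ β / l ! := by
  have hβ : 0 ≤ β := (Nat.cast_nonneg l).trans hlβ
  rcases eq_or_ne x x₀ with rfl | hne
  · simp only [taylorWithinEval_self, sub_self, abs_zero]
    have : 0 ≤ δ := (abs_nonneg _).trans hδ
    positivity
  obtain ⟨ξ, hξ, hrem⟩ := exists_mem_uIcc_sub_taylorWithinEval_eq hf x₀ x
  have hdist : 0 < |x - x₀| := abs_pos.2 (sub_ne_zero.2 hne)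
  have hξx₀ : |iteratedDeriv l f ξ - iteratedDeriv l f x₀| ≤ L * |x - x₀| ^ (β - l) :=
    (hHolder ξ (hs.uIcc_subset hx₀ hx hξ) x₀ hx₀).trans <| mul_le_mul_of_nonneg_left
      (Real.rpow_le_rpow (abs_nonneg _) (abs_sub_left_of_mem_uIcc hξ) (sub_nonneg.2 hlβ)) hL
  calc |f x - taylorWithinEval f l univ x₀ x|
      = |iteratedDeriv l f ξ - iteratedDeriv l f x₀| * |x - x₀| ^ l / l ! := by
        rw [hrem, abs_div, abs_mul, abs_pow, Nat.abs_cast]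
    _ ≤ L * |x - x₀| ^ (β - l) * |x - x₀| ^ l / l ! := by gcongr
    _ = L * |x - x₀| ^ β / l ! := by
        rw [mul_assoc, ← Real.rpow_natCast, ← Real.rpow_add hdist, sub_add_cancel]
    _ ≤ L * δ ^ β / l ! := by gcongr

theorem sum_mul_sum_pow_eq_of_moments {ι : Type*} (s : Finset ι) (w u : ι → ℝ) (c : ℕ → ℝ)
    {n : ℕ} (hw : ∀ k ≤ n, ∑ i ∈ s, u i ^ k * w i = if k = 0 then 1 else 0) :
    ∑ i ∈ s, w i * ∑ k ∈ range (n + 1), c k * u i ^ k = c 0 := by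
  calc ∑ i ∈ s, w i * ∑ k ∈ range (n + 1), c k * u i ^ k
      = ∑ k ∈ range (n + 1), c k * ∑ i ∈ s, u i ^ k * w i := by
        simp only [Finset.mul_sum]
        rw [Finset.sum_comm]
        exact sum_congr rfl fun k _ => sum_congr rfl fun i _ => by ring
    _ = ∑ k ∈ range (n + 1), c k * if k = 0 then 1 else 0 :=
        sum_congr rfl fun k hk => by rw [hw k (mem_range_succ_iff.1 hk)]
    _ = c 0 := by simp

theorem sum_mul_sub_eq_sum_mul_sub_taylorWithinEval {ι : Type*} (s : Finset ι) (w u : ι → ℝ)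
    {n : ℕ} (hw : ∀ k ≤ n, ∑ i ∈ s, u i ^ k * w i = if k = 0 then 1 else 0)
    (f : ℝ → ℝ) (x₀ h : ℝ) :
    ∑ i ∈ s, w i * (f (x₀ + h * u i) - f x₀) =
      ∑ i ∈ s, w i * (f (x₀ + h * u i) - taylorWithinEval f n univ x₀ (x₀ + h * u i)) := by
  have htaylor : ∑ i ∈ s, w i * taylorWithinEval f n univ x₀ (x₀ + h * u i) = f x₀ := by
    simp only [taylor_within_apply, add_sub_cancel_left, smul_eq_mul, mul_pow]
    convert sum_mul_sum_pow_eq_of_moments s w u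
      (fun k => (k ! : ℝ)⁻¹ * h ^ k * iteratedDerivWithin k f univ x₀) hw using 4
    · ring
    · simp
  have hconst : ∑ i ∈ s, w i * f x₀ = f x₀ := by
    simpa [← Finset.sum_mul] using congrArg (· * f x₀) (hw 0 (Nat.zero_le n))
  simp only [mul_sub, sum_sub_distrib, htaylor, hconst]

theorem abs_sum_mul_le_card_mul {ι : Type*} (s : Finset ι) (a b : ι → ℝ) {A B : ℝ}
    (ha : ∀ i ∈ s, |a i| ≤ A) (hb : ∀ i ∈ s, |b i| ≤ B) :
    |∑ i ∈ s, a i * b i| ≤ #s * (A * B) :=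
  calc |∑ i ∈ s, a i * b i| ≤ ∑ i ∈ s, |a i * b i| := abs_sum_le_sum_abs _ _
    _ ≤ ∑ _i ∈ s, A * B := sum_le_sum fun i hi => by
        rw [abs_mul]
        exact mul_le_mul (ha i hi) (hb i hi) (abs_nonneg _) ((abs_nonneg _).trans (ha i hi))
    _ = #s * (A * B) := by rw [sum_const, nsmul_eq_mul]

theorem card_Icc_neg_natCast (r : ℕ) : (#(Finset.Icc (-(r : ℤ)) r) : ℝ) = 2 * r + 1 := by
  rw [Int.card_Icc, show (r + 1 - -r : ℤ).toNat = 2 * r + 1 by omega]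
  push_cast
  rfl

theorem abs_intCast_le_of_mem_Icc {r : ℕ} {i : ℤ} (hi : i ∈ Finset.Icc (-(r : ℤ)) r) :
    |(i : ℝ)| ≤ r := by
  rw [← Int.cast_abs, ← Int.cast_natCast]
  exact_mod_cast abs_le.2 (Finset.mem_Icc.1 hi)

theorem add_intCast_div_mem_Icc {r t T : ℕ} (hT : 0 < T) (hrt : r ≤ t) (htT : t + r ≤ T)
    {i : ℤ} (hi : |(i : ℝ)| ≤ r) : ((t : ℝ) + i) / T ∈ Icc (0 : ℝ) 1 := by
  have hTpos : (0 : ℝ) < T := by exact_mod_cast hT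
  have hrt' : (r : ℝ) ≤ t := by exact_mod_cast hrt
  have htT' : (t : ℝ) + r ≤ T := by exact_mod_cast htT
  obtain ⟨hi₁, hi₂⟩ := abs_le.1 hi
  exact ⟨div_nonneg (by linarith) hTpos.le, (div_le_one hTpos).2 (by linarith)⟩

theorem kernel_bias_bound_general (l : ℕ) (β L Wmax : ℝ)
    (hβ1 : (l : ℝ) < β) (hL : 0 < L)
    (f : ℝ → ℝ) (hf : ContDiff ℝ (l : ℕ∞) f)
    (hHolder : ∀ x ∈ Set.Icc (0 : ℝ) 1, ∀ x' ∈ Set.Icc (0 : ℝ) 1,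
      |iteratedDeriv l f x - iteratedDeriv l f x'| ≤ L * |x - x'| ^ (β - l))
    (r t T : ℕ) (hT : 0 < T) (hrt : r ≤ t) (htT : t + r ≤ T)
    (W : ℤ → ℝ) (hWb : ∀ i ∈ Finset.Icc (-(r : ℤ)) (r : ℤ), |W i| ≤ Wmax)
    (hWm : ∀ k : ℕ, k ≤ l →
      (2 * (r : ℝ) + 1)⁻¹ * ∑ i ∈ Finset.Icc (-(r : ℤ)) (r : ℤ), (i : ℝ) ^ k * W i
        = if k = 0 then 1 else 0) :
    |(2 * (r : ℝ) + 1)⁻¹ * ∑ i ∈ Finset.Icc (-(r : ℤ)) (r : ℤ),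
        W i * (f (((t : ℝ) + (i : ℝ)) / T) - f ((t : ℝ) / T))|
      ≤ L * Wmax / (Nat.factorial l) * ((r : ℝ) / T) ^ β := by
  set N : ℝ := 2 * r + 1
  set s : Finset ℤ := Icc (-(r : ℤ)) r
  set x₀ : ℝ := t / T
  have hN : 0 < N := by positivity
  have hpoint : ∀ i : ℤ, ((t : ℝ) + i) / T = x₀ + (T : ℝ)⁻¹ * i := fun i => by ring
  have hx₀ : x₀ ∈ Icc (0 : ℝ) 1 := by
    simpa using add_intCast_div_mem_Icc hT hrt htT (i := 0) (by simp)
  have hmoments : ∀ k ≤ l, ∑ i ∈ s, (i : ℝ) ^ k * (N⁻¹ * W i) = if k = 0 then 1 else 0 :=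
    fun k hk => by
      rw [← hWm k hk, Finset.mul_sum]
      exact sum_congr rfl fun i _ => by ring
  have hweight : ∀ i ∈ s, |N⁻¹ * W i| ≤ N⁻¹ * Wmax := fun i hi => by
    rw [abs_mul, abs_of_pos (inv_pos.2 hN)]
    exact mul_le_mul_of_nonneg_left (hWb i hi) (inv_pos.2 hN).le
  have hremainder : ∀ i ∈ s, |f (x₀ + (T : ℝ)⁻¹ * i) -
      taylorWithinEval f l univ x₀ (x₀ + (T : ℝ)⁻¹ * i)| ≤ L * ((r : ℝ) / T) ^ β / l ! :=
    fun i hi => by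
      have hi' := abs_intCast_le_of_mem_Icc hi
      refine abs_sub_taylorWithinEval_le_of_holder ordConnected_Icc hf hβ1.le hL.le hHolder hx₀
        (hpoint i ▸ add_intCast_div_mem_Icc hT hrt htT hi') ?_
      rw [add_sub_cancel_left, abs_mul, abs_inv, Nat.abs_cast, inv_mul_eq_div]
      gcongr
  simp only [hpoint, Finset.mul_sum, ← mul_assoc]
  rw [sum_mul_sub_eq_sum_mul_sub_taylorWithinEval s (fun i => N⁻¹ * W i) (fun i => (i : ℝ))
    hmoments]
  calc _ ≤ #s * (N⁻¹ * Wmax * (L * ((r : ℝ) / T) ^ β / l !)) :=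
        abs_sum_mul_le_card_mul _ _ _ hweight hremainder
    _ = L * Wmax / l ! * ((r : ℝ) / T) ^ β := by
        rw [show (#s : ℝ) = N from card_Icc_neg_natCast r]
        field_simp

theorem kernel_bias_bound (l : ℕ) (β L Wmax : ℝ)
    (hβ1 : (l : ℝ) < β) (hβ2 : β ≤ (l : ℝ) + 1) (hL : 0 < L)
    (f : ℝ → ℝ) (hf : ContDiff ℝ (l : ℕ∞) f)
    (hHolder : ∀ x ∈ Set.Icc (0 : ℝ) 1, ∀ x' ∈ Set.Icc (0 : ℝ) 1,
      |iteratedDeriv l f x - iteratedDeriv l f x'| ≤ L * |x - x'| ^ (β - l))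
    (r t T : ℕ) (hT : 0 < T) (hrt : r ≤ t) (htT : t + r ≤ T)
    (W : ℤ → ℝ) (hWb : ∀ i ∈ Finset.Icc (-(r : ℤ)) (r : ℤ), |W i| ≤ Wmax)
    (hWm : ∀ k : ℕ, k ≤ l →
      (2 * (r : ℝ) + 1)⁻¹ * ∑ i ∈ Finset.Icc (-(r : ℤ)) (r : ℤ), (i : ℝ) ^ k * W i
        = if k = 0 then 1 else 0) :
    |(2 * (r : ℝ) + 1)⁻¹ * ∑ i ∈ Finset.Icc (-(r : ℤ)) (r : ℤ),
        W i * (f (((t : ℝ) + (i : ℝ)) / T) - f ((t : ℝ) / T))|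
      ≤ L * Wmax / (Nat.factorial l) * ((r : ℝ) / T) ^ β :=
  kernel_bias_bound_general l β L Wmax hβ1 hL f hf hHolder r t T hT hrt htT W hWb hWm
end
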